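/- arXiv:math/0508220 — 5 statements merged into one kernel-verified Lean document; each statement's English description precedes it below -/
import Mathlib

section
/- Let g be a natural number and let A be a symmetric g×g matrix with real entries. Then the symmetric 2g×2g block matrix M = [[A, -I],[-I, 0]] (i.e. Matrix.fromBlocks A (-1) (-1) 0) has exactly g positive eigenvalues and exactly g negative eigenvalues, counted with multiplicity; that is, its signature is (g, g). -/
open Matrix

local notation "⟪" x ", " y "⟫" => @inner ℝ _ _ x y

section Aux

variable {n : Type*} [Fintype n] [DecidableEq n]

lemma repr_eq_zero_of_span {ι : Type*} [Fintype ι] {E : Type*} [NormedAddCommGroup E]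
    [InnerProductSpace ℝ E] (b : OrthonormalBasis ι ℝ E) (S : Set ι) {x : E}
    (hx : x ∈ Submodule.span ℝ (b '' S)) {j : ι} (hj : j ∉ S) : b.repr x j = 0 := by
  rw [b.repr_apply_apply]
  induction hx using Submodule.span_induction with
  | mem y hy =>
    obtain ⟨i, hi, rfl⟩ := hy
    exact b.orthonormal.2 (fun h : j = i => hj (h ▸ hi))
  | zero => exact inner_zero_right _
  | add x y hx hy ihx ihy => rw [inner_add_right, ihx, ihy, add_zero]
  | smul a x hx ihx => rw [real_inner_smul_right, ihx, mul_zero]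

lemma quad_eq (M : Matrix n n ℝ) (hM : M.IsHermitian) (x : EuclideanSpace ℝ n) :
    ⟪x, Matrix.toEuclideanLin M x⟫ =
      ∑ j, hM.eigenvalues j * (hM.eigenvectorBasis.repr x j) ^ 2 := by
  set b := hM.eigenvectorBasis with hb
  have hT : ∀ j, Matrix.toEuclideanLin M (b j) = hM.eigenvalues j • b j := by
    intro j
    have h := hM.mulVec_eigenvectorBasis j
    rw [Matrix.toEuclideanLin_apply]
    rw [hb, h]
    rfl
  have hx : Matrix.toEuclideanLin M x = ∑ j, (b.repr x j * hM.eigenvalues j) • b j := by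
    conv_lhs => rw [← b.sum_repr x]
    rw [map_sum]
    exact Finset.sum_congr rfl fun j _ => by rw [_root_.map_smul, hT j, smul_smul]
  rw [hx, inner_sum]
  refine Finset.sum_congr rfl fun j _ => ?_
  rw [real_inner_smul_right, real_inner_comm, ← b.repr_apply_apply]
  ring

lemma card_le_aux_pos (M : Matrix n n ℝ) (hM : M.IsHermitian)
    (W : Submodule ℝ (EuclideanSpace ℝ n))
    (hW : ∀ x ∈ W, x ≠ 0 → 0 < ⟪x, Matrix.toEuclideanLin M x⟫) :
    Module.finrank ℝ W + Fintype.card {i // hM.eigenvalues i ≤ 0} ≤ Fintype.card n := by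
  classical
  set b := hM.eigenvectorBasis with hb
  set S : Set n := {i | hM.eigenvalues i ≤ 0} with hS
  set V := Submodule.span ℝ (b '' S) with hV
  have hVq : ∀ x ∈ V, ⟪x, Matrix.toEuclideanLin M x⟫ ≤ 0 := by
    intro x hx
    rw [quad_eq M hM x]
    refine Finset.sum_nonpos fun j _ => ?_
    by_cases hj : j ∈ S
    · exact mul_nonpos_iff.mpr (Or.inr ⟨hj, sq_nonneg _⟩)
    · rw [repr_eq_zero_of_span b S hx hj]
      simp
  have hdisj : W ⊓ V = ⊥ := by
    rw [Submodule.eq_bot_iff]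
    rintro x ⟨hxW, hxV⟩
    by_contra hx0
    exact absurd (hVq x hxV) (not_le.2 (hW x hxW hx0))
  have hli : LinearIndependent ℝ (fun i : S => b i) :=
    b.orthonormal.linearIndependent.comp _ Subtype.val_injective
  have hVrank : Module.finrank ℝ V = Fintype.card S := by
    rw [hV, Set.image_eq_range]
    exact finrank_span_eq_card hli
  have hsum := Submodule.finrank_sup_add_finrank_inf_eq W V
  rw [hdisj, finrank_bot, add_zero] at hsum
  have hle : Module.finrank ℝ ↥(W ⊔ V) ≤ Fintype.card n := by
    simpa [finrank_euclideanSpace] using Submodule.finrank_le (W ⊔ V)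
  have hcardS : Fintype.card S = Fintype.card {i // hM.eigenvalues i ≤ 0} :=
    Fintype.card_congr (Equiv.subtypeEquivRight fun i => Iff.rfl)
  omega

lemma card_le_aux_neg (M : Matrix n n ℝ) (hM : M.IsHermitian)
    (W : Submodule ℝ (EuclideanSpace ℝ n))
    (hW : ∀ x ∈ W, x ≠ 0 → ⟪x, Matrix.toEuclideanLin M x⟫ < 0) :
    Module.finrank ℝ W + Fintype.card {i // 0 ≤ hM.eigenvalues i} ≤ Fintype.card n := by
  classical
  set b := hM.eigenvectorBasis with hb
  set S : Set n := {i | 0 ≤ hM.eigenvalues i} with hS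
  set V := Submodule.span ℝ (b '' S) with hV
  have hVq : ∀ x ∈ V, 0 ≤ ⟪x, Matrix.toEuclideanLin M x⟫ := by
    intro x hx
    rw [quad_eq M hM x]
    refine Finset.sum_nonneg fun j _ => ?_
    by_cases hj : j ∈ S
    · exact mul_nonneg hj (sq_nonneg _)
    · rw [repr_eq_zero_of_span b S hx hj]
      simp
  have hdisj : W ⊓ V = ⊥ := by
    rw [Submodule.eq_bot_iff]
    rintro x ⟨hxW, hxV⟩
    by_contra hx0
    exact absurd (hVq x hxV) (not_le.2 (hW x hxW hx0))
  have hli : LinearIndependent ℝ (fun i : S => b i) :=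
    b.orthonormal.linearIndependent.comp _ Subtype.val_injective
  have hVrank : Module.finrank ℝ V = Fintype.card S := by
    rw [hV, Set.image_eq_range]
    exact finrank_span_eq_card hli
  have hsum := Submodule.finrank_sup_add_finrank_inf_eq W V
  rw [hdisj, finrank_bot, add_zero] at hsum
  have hle : Module.finrank ℝ ↥(W ⊔ V) ≤ Fintype.card n := by
    simpa [finrank_euclideanSpace] using Submodule.finrank_le (W ⊔ V)
  have hcardS : Fintype.card S = Fintype.card {i // 0 ≤ hM.eigenvalues i} :=
    Fintype.card_congr (Equiv.subtypeEquivRight fun i => Iff.rfl)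
  omega

end Aux

section Main

variable {g : ℕ}

/-- The graph map `u ↦ (u, C *ᵥ u)` as a linear map between Euclidean spaces. -/
noncomputable def graphMap (C : Matrix (Fin g) (Fin g) ℝ) :
    EuclideanSpace ℝ (Fin g) →ₗ[ℝ] EuclideanSpace ℝ (Fin g ⊕ Fin g) where
  toFun u := (WithLp.equiv 2 _).symm
    (Sum.elim ((WithLp.equiv 2 _) u) (C *ᵥ (WithLp.equiv 2 _) u))
  map_add' u v := by
    ext i
    cases i <;>
      simp [WithLp.equiv_symm_apply, WithLp.equiv_apply, Matrix.mulVec_add,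
        PiLp.add_apply]
  map_smul' a u := by
    ext i
    cases i <;>
      simp [WithLp.equiv_symm_apply, WithLp.equiv_apply, Matrix.mulVec_smul,
        PiLp.smul_apply]

lemma graphMap_injective (C : Matrix (Fin g) (Fin g) ℝ) :
    Function.Injective (graphMap C) := by
  intro u v h
  have h1 : Sum.elim ((WithLp.equiv 2 _) u) (C *ᵥ (WithLp.equiv 2 _) u) =
      Sum.elim ((WithLp.equiv 2 _) v) (C *ᵥ (WithLp.equiv 2 _) v) :=
    (WithLp.equiv 2 _).symm.injective h
  ext i
  exact congrFun h1 (Sum.inl i)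

lemma quad_graphMap (A C : Matrix (Fin g) (Fin g) ℝ) (u : EuclideanSpace ℝ (Fin g)) :
    ⟪graphMap C u, Matrix.toEuclideanLin
      (Matrix.fromBlocks A (-1) (-1) (0 : Matrix (Fin g) (Fin g) ℝ)) (graphMap C u)⟫ =
    (WithLp.equiv 2 _) u ⬝ᵥ A *ᵥ (WithLp.equiv 2 _) u
      - 2 * ((WithLp.equiv 2 _) u ⬝ᵥ C *ᵥ (WithLp.equiv 2 _) u) := by
  set u' : Fin g → ℝ := (WithLp.equiv 2 _) u with hu'
  have h1 : graphMap C u = (WithLp.equiv 2 _).symm (Sum.elim u' (C *ᵥ u')) := rfl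
  rw [h1, WithLp.equiv_symm_apply, Matrix.toEuclideanLin_apply_piLp_toLp,
    EuclideanSpace.inner_toLp_toLp]
  rw [Matrix.fromBlocks_mulVec]
  simp only [Sum.elim_comp_inl, Sum.elim_comp_inr, Matrix.neg_mulVec, Matrix.one_mulVec,
    Matrix.zero_mulVec, add_zero, star_trivial, sumElim_dotProduct_sumElim,
    dotProduct_add, dotProduct_neg]
  simp only [add_dotProduct, neg_dotProduct]
  rw [dotProduct_comm (A *ᵥ u') u', dotProduct_comm (C *ᵥ u') u']
  ring

end Main

lemma dotProduct_self_pos' {m : Type*} [Fintype m] {v : m → ℝ} (hv : v ≠ 0) :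
    0 < v ⬝ᵥ v := by
  have := Matrix.dotProduct_self_star_pos_iff (v := v)
  rw [star_trivial] at this
  exact this.mpr hv

/-- Remark preceding Proposition 2.11: for a symmetric `g × g` real matrix `A`,
the symmetric block matrix `M = [[A, -I], [-I, 0]]` has signature `(g, g)`, i.e. exactly
`g` positive and `g` negative eigenvalues, counted with multiplicity. -/
theorem signature_fromBlocks_neg_one (g : ℕ) (A : Matrix (Fin g) (Fin g) ℝ) (hA : A.IsSymm)
    (hM : (Matrix.fromBlocks A (-1) (-1) (0 : Matrix (Fin g) (Fin g) ℝ)).IsHermitian) :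
    Fintype.card {i // 0 < hM.eigenvalues i} = g ∧
      Fintype.card {i // hM.eigenvalues i < 0} = g := by
  classical
  set M := Matrix.fromBlocks A (-1) (-1) (0 : Matrix (Fin g) (Fin g) ℝ) with hMdef
  -- the two graph subspaces
  have hrank : ∀ C : Matrix (Fin g) (Fin g) ℝ,
      Module.finrank ℝ ↥(LinearMap.range (graphMap C)) = g := by
    intro C
    rw [LinearMap.finrank_range_of_inj (graphMap_injective C), finrank_euclideanSpace,
      Fintype.card_fin]
  have hnz : ∀ (C : Matrix (Fin g) (Fin g) ℝ) (u : EuclideanSpace ℝ (Fin g)),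
      graphMap C u ≠ 0 → ((WithLp.equiv 2 (Fin g → ℝ)) u) ⬝ᵥ ((WithLp.equiv 2 (Fin g → ℝ)) u)
        > 0 := by
    intro C u hu
    apply dotProduct_self_pos'
    intro h0
    apply hu
    have hu0 : u = 0 := (WithLp.equiv 2 (Fin g → ℝ)).injective
      (by rw [h0]; rfl)
    rw [hu0, map_zero]
  -- positive definite subspace
  have h1 := card_le_aux_pos M hM (LinearMap.range (graphMap ((2⁻¹ : ℝ) • (A - 1)))) ?_
  have h2 := card_le_aux_neg M hM (LinearMap.range (graphMap ((2⁻¹ : ℝ) • (A + 1)))) ?_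
  rotate_left
  · rintro x ⟨u, rfl⟩ hx0
    rw [hMdef, quad_graphMap]
    set u' : Fin g → ℝ := (WithLp.equiv 2 _) u with hu'
    have hq : u' ⬝ᵥ A *ᵥ u' - 2 * (u' ⬝ᵥ ((2⁻¹ : ℝ) • (A + 1)) *ᵥ u') = -(u' ⬝ᵥ u') := by
      simp only [Matrix.smul_mulVec, Matrix.add_mulVec, Matrix.one_mulVec,
        dotProduct_smul, dotProduct_add, smul_eq_mul]
      ring
    rw [hq]
    have := hnz _ u hx0
    linarith
  · rintro x ⟨u, rfl⟩ hx0
    rw [hMdef, quad_graphMap]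
    set u' : Fin g → ℝ := (WithLp.equiv 2 _) u with hu'
    have hq : u' ⬝ᵥ A *ᵥ u' - 2 * (u' ⬝ᵥ ((2⁻¹ : ℝ) • (A - 1)) *ᵥ u') = u' ⬝ᵥ u' := by
      simp only [Matrix.smul_mulVec, Matrix.sub_mulVec, Matrix.one_mulVec,
        dotProduct_smul, dotProduct_sub, smul_eq_mul]
      ring
    rw [hq]
    exact hnz _ u hx0
  rw [hrank] at h1 h2
  have hcardn : Fintype.card (Fin g ⊕ Fin g) = g + g := by simp
  rw [hcardn] at h1 h2
  have e1 : Fintype.card {i // ¬ 0 < hM.eigenvalues i} =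
      Fintype.card {i // hM.eigenvalues i ≤ 0} :=
    Fintype.card_congr (Equiv.subtypeEquivRight fun i => not_lt)
  have e2 : Fintype.card {i // ¬ hM.eigenvalues i < 0} =
      Fintype.card {i // 0 ≤ hM.eigenvalues i} :=
    Fintype.card_congr (Equiv.subtypeEquivRight fun i => not_lt)
  have c1 := Fintype.card_subtype_compl (fun i => 0 < hM.eigenvalues i)
  have c2 := Fintype.card_subtype_compl (fun i => hM.eigenvalues i < 0)
  have l1 := Fintype.card_subtype_le (fun i : Fin g ⊕ Fin g => 0 < hM.eigenvalues i)
  have l2 := Fintype.card_subtype_le (fun i : Fin g ⊕ Fin g => hM.eigenvalues i < 0)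
  have m1 : Fintype.card {i // 0 < hM.eigenvalues i} ≤
      Fintype.card {i // 0 ≤ hM.eigenvalues i} :=
    Fintype.card_subtype_mono _ _ fun i hi => le_of_lt hi
  have m2 : Fintype.card {i // hM.eigenvalues i < 0} ≤
      Fintype.card {i // hM.eigenvalues i ≤ 0} :=
    Fintype.card_subtype_mono _ _ fun i hi => le_of_lt hi
  rw [e1] at c1
  rw [e2] at c2
  rw [hcardn] at c1 c2 l1 l2
  omega
end

section
/- Let S be a symmetric n×n real matrix, X a g×n real matrix, and Y a symmetric g×g real matrix. Consider the symmetric (n+2g)×(n+2g) block matrix M = [[S, Xᵀ, 0],[X, Y, -I],[0, -I, 0]]. Then det M = (-1)^g · det S, the number of positive eigenvalues of M (with multiplicity) equals σ₊(S) + g, and the number of negative eigenvalues of M equals σ₋(S) + g. -/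
/-!
Completing the square by the unimodular substitution `w ↦ w - X u - Y v / 2` turns `M` into the
block-diagonal matrix `S ⊕ H` with `H = [[0, -1], [-1, 0]]`, and the identity
`-2 v w = (v - w/2)² - (v + w/2)²` shows that `H` has determinant `(-1)^g` and is congruent to
`diag(-1, 1)`. The signature statement is then Sylvester's law of inertia, proved for diagonal
forms by a dimension count and transported to eigenvalues by the spectral theorem.
-/

open Matrix

namespace Matrix

theorem dotProduct_diagonal_mulVec_self {R ι : Type*} [CommSemiring R] [Fintype ι]
    [DecidableEq ι] (d x : ι → R) :
    x ⬝ᵥ diagonal d *ᵥ x = ∑ i, d i * x i ^ 2 := by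
  simp only [dotProduct, mulVec_diagonal]
  exact Finset.sum_congr rfl fun i _ => by ring

section Congruence

variable {R : Type*} [CommRing R] {ι κ : Type*} [Fintype ι] [Fintype κ] [DecidableEq ι]
  [DecidableEq κ]

def IsCongruent (A B : Matrix ι ι R) : Prop :=
  ∃ P : Matrix ι ι R, IsUnit P ∧ A = Pᵀ * B * P

namespace IsCongruent

variable {A B C : Matrix ι ι R}

theorem symm (h : IsCongruent A B) : IsCongruent B A := by
  obtain ⟨_, ⟨P, rfl⟩, rfl⟩ := h
  refine ⟨↑P⁻¹, Units.isUnit _, ?_⟩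
  calc B = (↑P * ↑P⁻¹ : Matrix ι ι R)ᵀ * B * (↑P * ↑P⁻¹) := by simp
    _ = _ := by simp only [transpose_mul, Matrix.mul_assoc]

theorem trans (hAB : IsCongruent A B) (hBC : IsCongruent B C) : IsCongruent A C := by
  obtain ⟨P, hP, rfl⟩ := hAB
  obtain ⟨P', hP', rfl⟩ := hBC
  exact ⟨P' * P, hP'.mul hP, by simp only [transpose_mul, Matrix.mul_assoc]⟩

theorem neg (h : IsCongruent A B) : IsCongruent (-A) (-B) := by
  obtain ⟨P, hP, rfl⟩ := h
  exact ⟨P, hP, by rw [Matrix.mul_neg, Matrix.neg_mul]⟩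

theorem fromBlocks {A' : Matrix ι ι R} {D D' : Matrix κ κ R} (hA : IsCongruent A A')
    (hD : IsCongruent D D') : IsCongruent (fromBlocks A 0 0 D) (fromBlocks A' 0 0 D') := by
  obtain ⟨P, hP, rfl⟩ := hA
  obtain ⟨P', hP', rfl⟩ := hD
  refine ⟨Matrix.fromBlocks P 0 0 P', ?_, ?_⟩
  · rw [isUnit_iff_isUnit_det] at hP hP' ⊢
    rw [det_fromBlocks_zero₂₁]
    exact hP.mul hP'
  · simp [fromBlocks_transpose, fromBlocks_multiply]

end IsCongruent

end Congruence

section Inertia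

variable {K : Type*} [Field K] [LinearOrder K] [IsStrictOrderedRing K]
  {ι κ : Type*} [Fintype ι] [Fintype κ] [DecidableEq ι] [DecidableEq κ]

theorem card_pos_le_of_diagonal_eq_transpose_mul {d : ι → K} {e : κ → K} (Q : Matrix κ ι K)
    (h : diagonal d = Qᵀ * diagonal e * Q) :
    Fintype.card {i // 0 < d i} ≤ Fintype.card {j // 0 < e j} := by
  by_contra! hlt
  -- Otherwise some nonzero `x` supported on `{d > 0}` has `Q x` vanishing on `{e > 0}`.
  let F : ({i // 0 < d i} → K) →ₗ[K] ({j // 0 < e j} → K) :=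
    LinearMap.funLeft K K Subtype.val ∘ₗ Q.mulVecLin ∘ₗ
      Function.ExtendByZero.linearMap K Subtype.val
  obtain ⟨c, hc, hc0⟩ := Submodule.exists_mem_ne_zero_of_ne_bot
    (F.ker_ne_bot_of_finrank_lt (by simpa using hlt))
  set x : ι → K := Function.extend Subtype.val c 0
  have hQx : ∀ j : {j // 0 < e j}, (Q *ᵥ x) j = 0 := congrFun hc
  have hx : ∀ i, ¬ 0 < d i → x i = 0 := fun i hi =>
    Function.extend_apply' _ _ _ fun ⟨a, ha⟩ => hi (ha ▸ a.2)
  have hform : x ⬝ᵥ diagonal d *ᵥ x = (Q *ᵥ x) ⬝ᵥ diagonal e *ᵥ (Q *ᵥ x) := by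
    rw [h, ← mulVec_mulVec, ← mulVec_mulVec, dotProduct_mulVec, vecMul_transpose]
  rw [dotProduct_diagonal_mulVec_self, dotProduct_diagonal_mulVec_self] at hform
  obtain ⟨i, hi⟩ := Function.ne_iff.mp hc0
  have hpos : 0 < ∑ i, d i * x i ^ 2 := by
    refine Finset.sum_pos' (fun i _ => ?_) ⟨i, Finset.mem_univ _, ?_⟩
    · by_cases hi : 0 < d i
      · positivity
      · simp [hx i hi]
    · rw [show x i = c i from Subtype.val_injective.extend_apply c 0 i]
      exact mul_pos i.2 (sq_pos_of_ne_zero hi)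
  have hnonpos : ∑ j, e j * (Q *ᵥ x) j ^ 2 ≤ 0 := by
    refine Finset.sum_nonpos fun j _ => ?_
    by_cases hj : 0 < e j
    · simp [hQx ⟨j, hj⟩]
    · exact mul_nonpos_of_nonpos_of_nonneg (not_lt.mp hj) (sq_nonneg _)
  linarith

theorem card_pos_eq_of_isCongruent_diagonal {d e : ι → K}
    (h : IsCongruent (diagonal d) (diagonal e)) :
    Fintype.card {i // 0 < d i} = Fintype.card {i // 0 < e i} := by
  obtain ⟨P', -, hP'⟩ := h.symm
  obtain ⟨P, -, hP⟩ := h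
  exact (card_pos_le_of_diagonal_eq_transpose_mul P hP).antisymm
    (card_pos_le_of_diagonal_eq_transpose_mul P' hP')

theorem card_neg_eq_of_isCongruent_diagonal {d e : ι → K}
    (h : IsCongruent (diagonal d) (diagonal e)) :
    Fintype.card {i // d i < 0} = Fintype.card {i // e i < 0} := by
  have h' := h.neg
  rw [diagonal_neg, diagonal_neg] at h'
  simpa only [Left.neg_pos_iff] using card_pos_eq_of_isCongruent_diagonal h'

end Inertia

namespace IsHermitian

variable {ι : Type*} [Fintype ι] [DecidableEq ι] {A : Matrix ι ι ℝ}

theorem isCongruent_diagonal_eigenvalues (hA : A.IsHermitian) :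
    IsCongruent A (diagonal hA.eigenvalues) := by
  refine ⟨star (hA.eigenvectorUnitary : Matrix ι ι ℝ), Unitary.isUnit_coe (U := star _), ?_⟩
  conv_lhs => rw [hA.spectral_theorem]
  simp [RCLike.ofReal_real_eq_id, star_eq_conjTranspose, conjTranspose_eq_transpose_of_trivial]

theorem card_pos_eigenvalues_eq (hA : A.IsHermitian) {e : ι → ℝ}
    (h : IsCongruent A (diagonal e)) :
    Fintype.card {i // 0 < hA.eigenvalues i} = Fintype.card {i // 0 < e i} :=
  card_pos_eq_of_isCongruent_diagonal (hA.isCongruent_diagonal_eigenvalues.symm.trans h)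

theorem card_neg_eigenvalues_eq (hA : A.IsHermitian) {e : ι → ℝ}
    (h : IsCongruent A (diagonal e)) :
    Fintype.card {i // hA.eigenvalues i < 0} = Fintype.card {i // e i < 0} :=
  card_neg_eq_of_isCongruent_diagonal (hA.isCongruent_diagonal_eigenvalues.symm.trans h)

end IsHermitian

section Bordered

variable {K : Type*} [Field K] [CharZero K] {m n : Type*} [Fintype m] [Fintype n]
  [DecidableEq m] [DecidableEq n]

variable (K n) in
/-- Rows `v + w/2` and `v - w/2`: then `-(v + w/2)² + (v - w/2)² = -2 v w`. -/
def hyperbolicSplitting : Matrix (n ⊕ n) (n ⊕ n) K :=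
  fromBlocks 1 ((2⁻¹ : K) • 1) 1 (-(2⁻¹ : K) • 1)

theorem det_hyperbolicSplitting : (hyperbolicSplitting K n).det = (-1) ^ Fintype.card n := by
  rw [hyperbolicSplitting, det_fromBlocks_one₁₁, Matrix.one_mul,
    show -(2⁻¹ : K) • (1 : Matrix n n K) - (2⁻¹ : K) • 1 = -1 by module, det_neg, det_one,
    mul_one]

theorem fromBlocks_zero_neg_one_eq :
    (fromBlocks 0 (-1) (-1) 0 : Matrix (n ⊕ n) (n ⊕ n) K) =
      (hyperbolicSplitting K n)ᵀ * diagonal (Sum.elim (-1) 1) * hyperbolicSplitting K n := by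
  have hdiag :
      diagonal (Sum.elim (-1) 1) = (fromBlocks (-1) 0 0 1 : Matrix (n ⊕ n) (n ⊕ n) K) := by
    rw [← fromBlocks_diagonal, ← diagonal_one', Pi.neg_def, ← diagonal_neg, diagonal_one']
  rw [hdiag, hyperbolicSplitting, fromBlocks_transpose, fromBlocks_multiply, fromBlocks_multiply]
  simp only [fromBlocks_inj]
  refine ⟨?_, ?_, ?_, ?_⟩ <;>
    simp only [transpose_smul, transpose_one, transpose_neg, mul_neg, mul_one, mul_zero, add_zero,
      zero_add, Algebra.mul_smul_comm, smul_neg, neg_smul, neg_neg, neg_add_cancel] <;>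
    module

theorem det_fromBlocks_zero_neg_one :
    (fromBlocks 0 (-1) (-1) 0 : Matrix (n ⊕ n) (n ⊕ n) K).det = (-1) ^ Fintype.card n := by
  rw [fromBlocks_zero_neg_one_eq, det_mul, det_mul, det_transpose, det_hyperbolicSplitting,
    det_diagonal, Fintype.prod_sum_type]
  simp only [Sum.elim_inl, Sum.elim_inr, Pi.neg_apply, Pi.one_apply, Finset.prod_const,
    Finset.card_univ, one_pow, mul_one]
  rw [← mul_pow, neg_one_mul, neg_neg, one_pow, one_mul]

theorem isCongruent_fromBlocks_zero_neg_one :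
    IsCongruent (fromBlocks 0 (-1) (-1) 0 : Matrix (n ⊕ n) (n ⊕ n) K)
      (diagonal (Sum.elim (-1) 1)) :=
  ⟨_, by simp [isUnit_iff_isUnit_det, det_hyperbolicSplitting], fromBlocks_zero_neg_one_eq⟩

/-- The substitution `w ↦ w - X u - Y v / 2`, which completes the square in `w`. -/
def borderedSubstitution (X : Matrix n m K) (Y : Matrix n n K) :
    Matrix (m ⊕ (n ⊕ n)) (m ⊕ (n ⊕ n)) K :=
  fromBlocks 1 0 (fromRows 0 (-X)) (fromBlocks 1 0 (-(2⁻¹ : K) • Y) 1)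

omit [CharZero K] in
theorem det_borderedSubstitution (X : Matrix n m K) (Y : Matrix n n K) :
    (borderedSubstitution X Y).det = 1 := by
  simp [borderedSubstitution, det_fromBlocks_zero₁₂]

theorem fromBlocks_bordered_eq (S : Matrix m m K) (X : Matrix n m K) {Y : Matrix n n K}
    (hY : Y.IsSymm) :
    fromBlocks S (fromCols Xᵀ 0) (fromRows X 0) (fromBlocks Y (-1) (-1) 0) =
      (borderedSubstitution X Y)ᵀ * fromBlocks S 0 0 (fromBlocks 0 (-1) (-1) 0) *
        borderedSubstitution X Y := by
  rw [borderedSubstitution, fromBlocks_transpose, fromBlocks_multiply, fromBlocks_multiply]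
  simp only [fromBlocks_transpose, transpose_fromRows, transpose_smul, transpose_neg,
    transpose_one, transpose_zero, hY.eq, fromBlocks_multiply, fromCols_mul_fromBlocks,
    fromBlocks_mul_fromRows, fromCols_mul_fromRows, fromBlocks_inj, Matrix.mul_zero,
    Matrix.zero_mul, Matrix.mul_one, Matrix.one_mul, Matrix.mul_neg, Matrix.neg_mul,
    Matrix.mul_smul, Algebra.mul_smul_comm, mul_one, one_mul, mul_zero, zero_mul, mul_neg, neg_mul,
    neg_smul, smul_neg, smul_zero, neg_neg, neg_zero, add_zero, zero_add, and_self, and_true,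
    true_and]
  module

theorem isCongruent_bordered (S : Matrix m m K) (X : Matrix n m K) {Y : Matrix n n K}
    (hY : Y.IsSymm) :
    IsCongruent
      (fromBlocks S (fromCols Xᵀ 0) (fromRows X 0) (fromBlocks Y (-1) (-1) (0 : Matrix n n K)))
      (fromBlocks S 0 0 (fromBlocks 0 (-1) (-1) 0)) :=
  ⟨_, by simp [isUnit_iff_isUnit_det, det_borderedSubstitution], fromBlocks_bordered_eq S X hY⟩

theorem det_bordered (S : Matrix m m K) (X : Matrix n m K) {Y : Matrix n n K} (hY : Y.IsSymm) :
    det (fromBlocks S (fromCols Xᵀ 0) (fromRows X 0)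
        (fromBlocks Y (-1) (-1) (0 : Matrix n n K))) = (-1) ^ Fintype.card n * S.det := by
  rw [fromBlocks_bordered_eq S X hY, det_mul, det_mul, det_transpose, det_borderedSubstitution,
    det_fromBlocks_zero₂₁, det_fromBlocks_zero_neg_one]
  ring

end Bordered

end Matrix

theorem Fintype.card_subtype_sum_elim {α ι κ : Type*} [Fintype ι] [Fintype κ] (p : α → Prop)
    [DecidablePred p] (a : ι → α) (b : κ → α) :
    Fintype.card {x // p (Sum.elim a b x)} =
      Fintype.card {i // p (a i)} + Fintype.card {j // p (b j)} :=
  (Fintype.card_congr (Equiv.subtypeSum)).trans (Fintype.card_sum ..)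

/-- The congruence computation used in the proof of Proposition 2.11: if `S` is a symmetric
`n × n` real matrix, `X` a `g × n` real matrix and `Y` a symmetric `g × g` real matrix, then
the symmetric block matrix `M = [[S, Xᵀ, 0], [X, Y, -I], [0, -I, 0]]` satisfies
`det M = (-1)^g · det S`, `σ₊(M) = σ₊(S) + g` and `σ₋(M) = σ₋(S) + g`. -/
theorem det_and_signature_bordered (n g : ℕ)
    (S : Matrix (Fin n) (Fin n) ℝ) (hS : S.IsHermitian)
    (X : Matrix (Fin g) (Fin n) ℝ) (Y : Matrix (Fin g) (Fin g) ℝ) (hY : Y.IsSymm)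
    (M : Matrix (Fin n ⊕ (Fin g ⊕ Fin g)) (Fin n ⊕ (Fin g ⊕ Fin g)) ℝ)
    (hMdef : M = Matrix.fromBlocks S
      (Matrix.fromCols Xᵀ 0)
      (Matrix.fromRows X 0)
      (Matrix.fromBlocks Y (-1) (-1) (0 : Matrix (Fin g) (Fin g) ℝ)))
    (hM : M.IsHermitian) :
    M.det = (-1) ^ g * S.det ∧
      Fintype.card {i // 0 < hM.eigenvalues i}
        = Fintype.card {i // 0 < hS.eigenvalues i} + g ∧
      Fintype.card {i // hM.eigenvalues i < 0}
        = Fintype.card {i // hS.eigenvalues i < 0} + g := by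
  have hcongr : IsCongruent M (diagonal (Sum.elim hS.eigenvalues (Sum.elim (-1) 1))) := by
    rw [hMdef, ← fromBlocks_diagonal]
    exact (isCongruent_bordered S X hY).trans
      (hS.isCongruent_diagonal_eigenvalues.fromBlocks isCongruent_fromBlocks_zero_neg_one)
  refine ⟨by rw [hMdef, det_bordered S X hY, Fintype.card_fin], ?_, ?_⟩
  · rw [hM.card_pos_eigenvalues_eq hcongr, Fintype.card_subtype_sum_elim ((0 : ℝ) < ·),
      Fintype.card_subtype_sum_elim ((0 : ℝ) < ·)]
    norm_num
  · rw [hM.card_neg_eigenvalues_eq hcongr, Fintype.card_subtype_sum_elim (· < (0 : ℝ)),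
      Fintype.card_subtype_sum_elim (· < (0 : ℝ))]
    norm_num
end

section
/- Let A be an invertible symmetric n₁×n₁ real matrix, C an invertible symmetric n₂×n₂ real matrix, B a g×n₁ real matrix and D a g×n₂ real matrix. Consider the symmetric (n₁+g+g+n₂)×(n₁+g+g+n₂) block matrix M = [[A, Bᵀ, 0, 0],[B, B·A⁻¹·Bᵀ, -I, 0],[0, -I, D·C⁻¹·Dᵀ, D],[0, 0, Dᵀ, C]]. Then the number of positive eigenvalues of M, counted with multiplicity, equals σ₊(A) + σ₊(C) + g, and the number of negative eigenvalues of M equals σ₋(A) + σ₋(C) + g. -/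
/-!
By Sylvester's law of inertia, the numbers of positive and negative eigenvalues of a real
symmetric matrix are invariants of its congruence class. In coordinates `(x, y, z, w)` the
quadratic form of `M` is
`Q_A(x + A⁻¹Bᵀy) - 2⟪y, z⟫ + Q_C(w + C⁻¹Dᵀz)`, so completing the two squares makes `M`
congruent to the block diagonal matrix `A ⊕ H ⊕ C`, where `H` is the hyperbolic form
`-2⟪y, z⟫`. Substituting `y = u + v`, `z = v - u` turns `H` into `2‖u‖² - 2‖v‖²`, which
contributes exactly `g` positive and `g` negative squares.
-/

open Matrix

namespace Matrix

section Inertia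

variable {m n : Type*} [Fintype m] [Fintype n] [DecidableEq m] [DecidableEq n]

omit [DecidableEq m] [DecidableEq n] in
lemma dotProduct_transpose_mul_mul_mulVec_self (P : Matrix m n ℝ) (M : Matrix m m ℝ)
    (x : n → ℝ) : x ⬝ᵥ (Pᵀ * M * P) *ᵥ x = (P *ᵥ x) ⬝ᵥ M *ᵥ (P *ᵥ x) := by
  rw [← mulVec_mulVec, ← mulVec_mulVec, dotProduct_mulVec, vecMul_transpose]

omit [Fintype m] [DecidableEq m] in
lemma dotProduct_diagonal_mulVec_self_s3 (μ x : n → ℝ) :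
    x ⬝ᵥ diagonal μ *ᵥ x = ∑ i, μ i * x i ^ 2 := by
  simp only [dotProduct, mulVec_diagonal]
  exact Finset.sum_congr rfl fun i _ => by ring

theorem card_pos_le_of_transpose_mul_diagonal_mul_eq_diagonal {μ : m → ℝ} {ν : n → ℝ}
    (P : Matrix m n ℝ) (h : Pᵀ * diagonal μ * P = diagonal ν) :
    Fintype.card {j // 0 < ν j} ≤ Fintype.card {i // 0 < μ i} := by
  by_contra! hlt
  -- A nonzero `x` supported where `ν > 0` with `P x` vanishing where `μ > 0` exists by counting
  -- dimensions; its form is positive on the `ν` side and nonpositive on the `μ` side.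
  let f : (n → ℝ) →ₗ[ℝ] ({j // ¬0 < ν j} → ℝ) × ({i // 0 < μ i} → ℝ) :=
    (LinearMap.funLeft ℝ ℝ Subtype.val).prod (LinearMap.funLeft ℝ ℝ Subtype.val ∘ₗ P.mulVecLin)
  have hdim : Module.finrank ℝ (({j // ¬0 < ν j} → ℝ) × ({i // 0 < μ i} → ℝ))
      < Module.finrank ℝ (n → ℝ) := by
    simp only [Module.finrank_prod, Module.finrank_fintype_fun_eq_card,
      Fintype.card_subtype_compl]
    have := Fintype.card_subtype_le fun j => 0 < ν j
    omega
  obtain ⟨x, hx, hx0⟩ :=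
    Submodule.exists_mem_ne_zero_of_ne_bot (LinearMap.ker_ne_bot_of_finrank_lt hdim)
  have hfx : f x = 0 := hx
  have hx_supp (j : n) (hj : ¬0 < ν j) : x j = 0 := congrFun (congrArg Prod.fst hfx) ⟨j, hj⟩
  have hPx_supp (i : m) (hi : 0 < μ i) : (P *ᵥ x) i = 0 :=
    congrFun (congrArg Prod.snd hfx) ⟨i, hi⟩
  have hform := dotProduct_transpose_mul_mul_mulVec_self P (diagonal μ) x
  rw [h, dotProduct_diagonal_mulVec_self_s3, dotProduct_diagonal_mulVec_self_s3] at hform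
  have hpos : 0 < ∑ j, ν j * x j ^ 2 := by
    obtain ⟨j, hj⟩ := Function.ne_iff.mp hx0
    have hνj : 0 < ν j := by_contra fun hνj => hj (hx_supp j hνj)
    refine Finset.sum_pos' (fun k _ => ?_)
      ⟨j, Finset.mem_univ _, mul_pos hνj (sq_pos_of_ne_zero hj)⟩
    by_cases hk : 0 < ν k
    · positivity
    · simp [hx_supp k hk]
  have hnonpos : ∑ i, μ i * (P *ᵥ x) i ^ 2 ≤ 0 := by
    refine Finset.sum_nonpos fun i _ => ?_
    by_cases hi : 0 < μ i
    · simp [hPx_supp i hi]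
    · exact mul_nonpos_of_nonpos_of_nonneg (not_lt.mp hi) (sq_nonneg _)
  linarith

theorem card_neg_le_of_transpose_mul_diagonal_mul_eq_diagonal {μ : m → ℝ} {ν : n → ℝ}
    (P : Matrix m n ℝ) (h : Pᵀ * diagonal μ * P = diagonal ν) :
    Fintype.card {j // ν j < 0} ≤ Fintype.card {i // μ i < 0} := by
  have := card_pos_le_of_transpose_mul_diagonal_mul_eq_diagonal
    (μ := fun i => -μ i) (ν := fun j => -ν j) P
    (by rw [← diagonal_neg, ← diagonal_neg, Matrix.mul_neg, Matrix.neg_mul, h])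
  simpa only [neg_pos] using this

def HasInertia (M : Matrix n n ℝ) (p q : ℕ) : Prop :=
  ∃ P : Matrix n n ℝ, IsUnit P ∧ ∃ μ : n → ℝ, Pᵀ * M * P = diagonal μ ∧
    Fintype.card {i // 0 < μ i} = p ∧ Fintype.card {i // μ i < 0} = q

theorem HasInertia.card_le_of_transpose_mul_mul_eq_diagonal {M : Matrix n n ℝ} {p q : ℕ}
    (h : M.HasInertia p q) {ν : m → ℝ} (Q : Matrix n m ℝ) (hQ : Qᵀ * M * Q = diagonal ν) :
    Fintype.card {j // 0 < ν j} ≤ p ∧ Fintype.card {j // ν j < 0} ≤ q := by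
  obtain ⟨P, hP, μ, hPM, rfl, rfl⟩ := h
  have hPP : P * P⁻¹ = 1 := mul_nonsing_inv P ((isUnit_iff_isUnit_det P).mp hP)
  have hcongr : (P⁻¹ * Q)ᵀ * diagonal μ * (P⁻¹ * Q) = diagonal ν := by
    rw [← hPM, ← hQ]
    calc (P⁻¹ * Q)ᵀ * (Pᵀ * M * P) * (P⁻¹ * Q)
        = Qᵀ * ((P * P⁻¹)ᵀ * M * (P * P⁻¹)) * Q := by
          simp only [transpose_mul, Matrix.mul_assoc]
      _ = Qᵀ * M * Q := by rw [hPP, transpose_one, Matrix.one_mul, Matrix.mul_one]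
  exact ⟨card_pos_le_of_transpose_mul_diagonal_mul_eq_diagonal _ hcongr,
    card_neg_le_of_transpose_mul_diagonal_mul_eq_diagonal _ hcongr⟩

theorem HasInertia.unique {M : Matrix n n ℝ} {p q p' q' : ℕ} (h : M.HasInertia p q)
    (h' : M.HasInertia p' q') : p = p' ∧ q = q' := by
  obtain ⟨hp', hq'⟩ : p' ≤ p ∧ q' ≤ q := by
    obtain ⟨P', -, μ', hPM', rfl, rfl⟩ := h'
    exact h.card_le_of_transpose_mul_mul_eq_diagonal P' hPM'
  obtain ⟨hp, hq⟩ : p ≤ p' ∧ q ≤ q' := by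
    obtain ⟨P, -, μ, hPM, rfl, rfl⟩ := h
    exact h'.card_le_of_transpose_mul_mul_eq_diagonal P hPM
  omega

theorem HasInertia.of_transpose_mul_mul {M Q : Matrix n n ℝ} {p q : ℕ} (hQ : IsUnit Q)
    (h : (Qᵀ * M * Q).HasInertia p q) : M.HasInertia p q := by
  obtain ⟨P, hP, μ, hPM, hp, hq⟩ := h
  exact ⟨Q * P, hQ.mul hP, μ, by rw [← hPM]; simp only [transpose_mul, Matrix.mul_assoc], hp, hq⟩

theorem hasInertia_diagonal (μ : n → ℝ) :
    (diagonal μ).HasInertia (Fintype.card {i // 0 < μ i}) (Fintype.card {i // μ i < 0}) :=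
  ⟨1, isUnit_one, μ, by simp, rfl, rfl⟩

theorem IsHermitian.hasInertia {M : Matrix n n ℝ} (hM : M.IsHermitian) :
    M.HasInertia (Fintype.card {i // 0 < hM.eigenvalues i})
      (Fintype.card {i // hM.eigenvalues i < 0}) :=
  ⟨hM.eigenvectorUnitary, Unitary.isUnit_coe, hM.eigenvalues,
    by simpa [star_eq_conjTranspose, conjTranspose_eq_transpose_of_trivial] using
      hM.conjStarAlgAut_star_eigenvectorUnitary, rfl, rfl⟩

theorem HasInertia.fromBlocks {M₁ : Matrix m m ℝ} {M₂ : Matrix n n ℝ} {p₁ q₁ p₂ q₂ : ℕ}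
    (h₁ : M₁.HasInertia p₁ q₁) (h₂ : M₂.HasInertia p₂ q₂) :
    (fromBlocks M₁ 0 0 M₂).HasInertia (p₁ + p₂) (q₁ + q₂) := by
  obtain ⟨P₁, hP₁, μ₁, hPM₁, rfl, rfl⟩ := h₁
  obtain ⟨P₂, hP₂, μ₂, hPM₂, rfl, rfl⟩ := h₂
  refine ⟨Matrix.fromBlocks P₁ 0 0 P₂, ?_, Sum.elim μ₁ μ₂, ?_, ?_, ?_⟩
  · simp only [isUnit_iff_isUnit_det, det_fromBlocks_zero₂₁] at hP₁ hP₂ ⊢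
    exact hP₁.mul hP₂
  · simp [fromBlocks_transpose, fromBlocks_multiply, hPM₁, hPM₂, fromBlocks_diagonal]
  all_goals rw [Fintype.card_congr Equiv.subtypeSum, Fintype.card_sum]; rfl

end Inertia

lemma fromCols_add_fromCols {R m n₁ n₂ : Type*} [Add R] (A₁ B₁ : Matrix m n₁ R)
    (A₂ B₂ : Matrix m n₂ R) : fromCols A₁ A₂ + fromCols B₁ B₂ = fromCols (A₁ + B₁) (A₂ + B₂) := by
  ext i (j | j) <;> rfl

lemma fromRows_add_fromRows {R m₁ m₂ n : Type*} [Add R] (A₁ B₁ : Matrix m₁ n R)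
    (A₂ B₂ : Matrix m₂ n R) : fromRows A₁ A₂ + fromRows B₁ B₂ = fromRows (A₁ + B₁) (A₂ + B₂) := by
  ext (i | i) j <;> rfl

end Matrix

section GluedLinkingMatrix

variable {α β δ : Type*} [Fintype α] [DecidableEq α] [Fintype β] [DecidableEq β]
  [Fintype δ] [DecidableEq δ]

noncomputable def gluedLinkingMatrix (A : Matrix α α ℝ) (B : Matrix β α ℝ) (C : Matrix δ δ ℝ)
    (D : Matrix β δ ℝ) : Matrix (α ⊕ (β ⊕ (β ⊕ δ))) (α ⊕ (β ⊕ (β ⊕ δ))) ℝ :=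
  fromBlocks A (fromCols Bᵀ (fromCols 0 0)) (fromRows B (fromRows 0 0))
    (fromBlocks (B * A⁻¹ * Bᵀ) (fromCols (-1) 0) (fromRows (-1) 0)
      (fromBlocks (D * C⁻¹ * Dᵀ) D Dᵀ C))

theorem hasInertia_hyperbolic_fromBlocks {C : Matrix δ δ ℝ} {p q : ℕ} (hC : C.HasInertia p q) :
    (fromBlocks 0 (fromCols (-1) 0) (fromRows (-1) 0) (fromBlocks 0 0 0 C) :
      Matrix (β ⊕ (β ⊕ δ)) (β ⊕ (β ⊕ δ)) ℝ).HasInertia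
      (Fintype.card β + p) (Fintype.card β + q) := by
  let S : Matrix (β ⊕ (β ⊕ δ)) (β ⊕ (β ⊕ δ)) ℝ :=
    fromBlocks 1 (fromCols 1 0) (fromRows (-1) 0) (fromBlocks 1 0 0 1)
  have hS : IsUnit S := by
    rw [isUnit_iff_isUnit_det, det_fromBlocks_one₁₁, fromRows_mul_fromCols]
    simp only [sub_eq_add_neg, fromBlocks_neg, fromBlocks_add, Matrix.mul_zero, neg_zero,
      add_zero, Matrix.mul_one, neg_neg, one_add_one_eq_two, det_fromBlocks_zero₂₁, det_one,
      mul_one, ← diagonal_ofNat, det_diagonal]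
    simp
  have hSHS : Sᵀ * fromBlocks 0 (fromCols (-1) 0) (fromRows (-1) 0) (fromBlocks 0 0 0 C) * S
      = fromBlocks 2 0 0 (fromBlocks (-2) 0 0 C) := by
    simp only [S, fromBlocks_transpose, transpose_fromCols, transpose_fromRows,
      transpose_one, transpose_zero, transpose_neg, fromBlocks_multiply, fromRows_mul_fromCols,
      fromCols_mul_fromRows, fromCols_mul_fromBlocks, fromBlocks_mul_fromRows, Matrix.mul_zero,
      Matrix.zero_mul, Matrix.mul_one, Matrix.one_mul, add_zero, zero_add]
    simp [fromCols_add_fromCols, fromRows_add_fromRows, fromBlocks_add, fromCols_mul_fromRows,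
      fromBlocks_mul_fromRows, one_add_one_eq_two, ← neg_add]
  have hpos₂ : (2 : Matrix β β ℝ).HasInertia (Fintype.card β) 0 := by
    have := hasInertia_diagonal fun _ : β => (2 : ℝ)
    norm_num at this
    exact this
  have hneg₂ : (-2 : Matrix β β ℝ).HasInertia 0 (Fintype.card β) := by
    have := hasInertia_diagonal fun _ : β => (-2 : ℝ)
    norm_num at this
    rwa [← diagonal_neg] at this
  refine HasInertia.of_transpose_mul_mul hS ?_
  rw [hSHS]
  simpa using hpos₂.fromBlocks (hneg₂.fromBlocks hC)

theorem hasInertia_gluedLinkingMatrix {A : Matrix α α ℝ} {C : Matrix δ δ ℝ} {pA qA pC qC : ℕ}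
    (hA : A.IsSymm) (hAinv : IsUnit A.det) (hC : C.IsSymm) (hCinv : IsUnit C.det)
    (hAi : A.HasInertia pA qA) (hCi : C.HasInertia pC qC) (B : Matrix β α ℝ)
    (D : Matrix β δ ℝ) :
    (gluedLinkingMatrix A B C D).HasInertia
      (pA + (Fintype.card β + pC)) (qA + (Fintype.card β + qC)) := by
  let T : Matrix (α ⊕ (β ⊕ (β ⊕ δ))) (α ⊕ (β ⊕ (β ⊕ δ))) ℝ :=
    fromBlocks 1 (fromCols (-(A⁻¹ * Bᵀ)) 0) 0
      (fromBlocks 1 0 0 (fromBlocks 1 0 (-(C⁻¹ * Dᵀ)) 1))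
  have hT : IsUnit T := by
    simp [T, isUnit_iff_isUnit_det, det_fromBlocks_zero₂₁]
  have hTMT : Tᵀ * gluedLinkingMatrix A B C D * T
      = fromBlocks A 0 0 (fromBlocks 0 (fromCols (-1) 0) (fromRows (-1) 0) (fromBlocks 0 0 0 C)) := by
    have hAt : (A⁻¹)ᵀ = A⁻¹ := by rw [transpose_nonsing_inv, hA.eq]
    have hCt : (C⁻¹)ᵀ = C⁻¹ := by rw [transpose_nonsing_inv, hC.eq]
    simp only [T, gluedLinkingMatrix, fromBlocks_transpose, transpose_fromCols, fromCols_zero,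
      fromRows_zero, transpose_one, transpose_zero, transpose_neg, transpose_mul, hAt, hCt,
      transpose_transpose, fromBlocks_multiply, fromRows_mul_fromCols, fromCols_mul_fromBlocks,
      fromBlocks_mul_fromRows, Matrix.mul_zero, Matrix.zero_mul, Matrix.mul_one, Matrix.one_mul,
      add_zero, zero_add]
    simp [mul_fromCols, fromRows_mul, fromCols_add_fromCols, fromRows_add_fromRows,
      fromBlocks_add, fromBlocks_multiply, fromCols_mul_fromBlocks, Matrix.mul_assoc,
      nonsing_inv_mul A hAinv, nonsing_inv_mul C hCinv, mul_nonsing_inv_cancel_left _ _ hAinv,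
      mul_nonsing_inv_cancel_left _ _ hCinv]
  refine HasInertia.of_transpose_mul_mul hT ?_
  rw [hTMT]
  exact hAi.fromBlocks (hasInertia_hyperbolic_fromBlocks hCi)

end GluedLinkingMatrix

/-- The signature part of Proposition 3.8 ([CL, Proposition 13]): the linking matrix
`M = [[A, Bᵀ, 0, 0], [B, B·A⁻¹·Bᵀ, -I, 0], [0, -I, D·C⁻¹·Dᵀ, D], [0, 0, Dᵀ, C]]` of the glued
cobordism has exactly `σ₊(A) + σ₊(C) + g` positive and `σ₋(A) + σ₋(C) + g` negative
eigenvalues, counted with multiplicity. -/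
theorem signature_glued_linking_matrix (n₁ n₂ g : ℕ)
    (A : Matrix (Fin n₁) (Fin n₁) ℝ) (hA : A.IsHermitian) (hAinv : IsUnit A.det)
    (C : Matrix (Fin n₂) (Fin n₂) ℝ) (hC : C.IsHermitian) (hCinv : IsUnit C.det)
    (B : Matrix (Fin g) (Fin n₁) ℝ) (D : Matrix (Fin g) (Fin n₂) ℝ)
    (M : Matrix (Fin n₁ ⊕ (Fin g ⊕ (Fin g ⊕ Fin n₂)))
      (Fin n₁ ⊕ (Fin g ⊕ (Fin g ⊕ Fin n₂))) ℝ)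
    (hMdef : M = Matrix.fromBlocks A
      (Matrix.fromCols Bᵀ (Matrix.fromCols 0 0))
      (Matrix.fromRows B (Matrix.fromRows 0 0))
      (Matrix.fromBlocks (B * A⁻¹ * Bᵀ)
        (Matrix.fromCols (-1) 0)
        (Matrix.fromRows (-1) 0)
        (Matrix.fromBlocks (D * C⁻¹ * Dᵀ) D Dᵀ C)))
    (hM : M.IsHermitian) :
    Fintype.card {i // 0 < hM.eigenvalues i}
      = Fintype.card {i // 0 < hA.eigenvalues i}
        + Fintype.card {i // 0 < hC.eigenvalues i} + g ∧
    Fintype.card {i // hM.eigenvalues i < 0}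
      = Fintype.card {i // hA.eigenvalues i < 0}
        + Fintype.card {i // hC.eigenvalues i < 0} + g := by
  subst hMdef
  have hMi := hasInertia_gluedLinkingMatrix (isHermitian_iff_isSymm.mp hA) hAinv
    (isHermitian_iff_isSymm.mp hC) hCinv hA.hasInertia hC.hasInertia B D
  obtain ⟨hpos, hneg⟩ := hM.hasInertia.unique hMi
  rw [Fintype.card_fin] at hpos hneg
  omega
end

section
/- Let A be an invertible symmetric n₁×n₁ real matrix, C an invertible symmetric n₂×n₂ real matrix, B a g×n₁ real matrix and D a g×n₂ real matrix. Consider the (n₁+g+g+n₂)×(n₁+g+g+n₂) block matrix M = [[A, Bᵀ, 0, 0],[B, B·A⁻¹·Bᵀ, -I, 0],[0, -I, D·C⁻¹·Dᵀ, D],[0, 0, Dᵀ, C]]. Then det M = (-1)^g · det A · det C. -/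
/-!
The Schur complement of `A` is the lower right block with `B A⁻¹ Bᵀ` cancelled. Regrouping its
index type as `(g ⊕ g) ⊕ n₂`, the Schur complement of `C` cancels `D C⁻¹ Dᵀ` in turn, and what
remains is the antidiagonal matrix `[[0, -I], [-I, 0]]`, of determinant `(-1)^g`.
-/

open Matrix

namespace Matrix

theorem fromBlocks_fromBlocks_submatrix_sumAssoc {l m o α : Type*} (A : Matrix l l α)
    (B₁ : Matrix l m α) (B₂ : Matrix l o α) (C₁ : Matrix m l α) (C₂ : Matrix o l α)
    (D₁₁ : Matrix m m α) (D₁₂ : Matrix m o α) (D₂₁ : Matrix o m α) (D₂₂ : Matrix o o α) :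
    (fromBlocks A (fromCols B₁ B₂) (fromRows C₁ C₂) (fromBlocks D₁₁ D₁₂ D₂₁ D₂₂)).submatrix
        (Equiv.sumAssoc l m o) (Equiv.sumAssoc l m o) =
      fromBlocks (fromBlocks A B₁ C₁ D₁₁) (fromRows B₂ D₁₂) (fromCols C₂ D₂₁) D₂₂ := by
  ext ((i | i) | i) ((j | j) | j) <;> rfl

theorem fromRows_mul_mul_fromCols {m m₁ m₂ n₁ n₂ α : Type*} [Fintype m] [Semiring α]
    (B₁ : Matrix m₁ m α) (B₂ : Matrix m₂ m α) (A : Matrix m m α)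
    (C₁ : Matrix m n₁ α) (C₂ : Matrix m n₂ α) :
    fromRows B₁ B₂ * A * fromCols C₁ C₂ =
      fromBlocks (B₁ * A * C₁) (B₁ * A * C₂) (B₂ * A * C₁) (B₂ * A * C₂) := by
  rw [fromRows_mul, fromRows_mul_fromCols]

section Det

variable {l m n R : Type*} [Fintype l] [Fintype m] [Fintype n]
  [DecidableEq l] [DecidableEq m] [DecidableEq n] [CommRing R]

theorem det_fromBlocks_fromBlocks_assoc (A : Matrix l l R)
    (B₁ : Matrix l m R) (B₂ : Matrix l n R) (C₁ : Matrix m l R) (C₂ : Matrix n l R)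
    (D₁₁ : Matrix m m R) (D₁₂ : Matrix m n R) (D₂₁ : Matrix n m R) (D₂₂ : Matrix n n R) :
    (fromBlocks A (fromCols B₁ B₂) (fromRows C₁ C₂) (fromBlocks D₁₁ D₁₂ D₂₁ D₂₂)).det =
      (fromBlocks (fromBlocks A B₁ C₁ D₁₁) (fromRows B₂ D₁₂) (fromCols C₂ D₂₁) D₂₂).det := by
  rw [← fromBlocks_fromBlocks_submatrix_sumAssoc, det_submatrix_equiv_self]

theorem det_fromBlocks_add_schur₁₁ (A : Matrix m m R) (B : Matrix m n R) (C : Matrix n m R)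
    (D : Matrix n n R) [Invertible A] :
    (fromBlocks A B C (D + C * ⅟A * B)).det = A.det * D.det := by
  rw [det_fromBlocks₁₁, add_sub_cancel_right]

theorem det_fromBlocks_add_schur₂₂ (A : Matrix m m R) (B : Matrix m n R) (C : Matrix n m R)
    (D : Matrix n n R) [Invertible D] :
    (fromBlocks (A + B * ⅟D * C) B C D).det = D.det * A.det := by
  rw [det_fromBlocks₂₂, add_sub_cancel_right]

theorem det_fromBlocks_zero_neg_one_neg_one_zero :
    (fromBlocks 0 (-1) (-1) 0 : Matrix (n ⊕ n) (n ⊕ n) R).det = (-1) ^ Fintype.card n := by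
  have h : (fromBlocks 0 (-1) (-1) 0 : Matrix (n ⊕ n) (n ⊕ n) R) =
      fromBlocks 1 1 0 1 * fromBlocks 1 (-1) (-1) 0 := by
    simp [fromBlocks_multiply]
  rw [h, det_mul, det_fromBlocks_zero₂₁, det_fromBlocks_one₁₁]
  simp [det_neg]

end Det

end Matrix

theorem det_glued_linking_matrix_general (n₁ n₂ g : ℕ)
    (A : Matrix (Fin n₁) (Fin n₁) ℝ) (hAinv : IsUnit A.det)
    (C : Matrix (Fin n₂) (Fin n₂) ℝ) (hCinv : IsUnit C.det)
    (B : Matrix (Fin g) (Fin n₁) ℝ) (D : Matrix (Fin g) (Fin n₂) ℝ)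
    (M : Matrix (Fin n₁ ⊕ (Fin g ⊕ (Fin g ⊕ Fin n₂)))
      (Fin n₁ ⊕ (Fin g ⊕ (Fin g ⊕ Fin n₂))) ℝ)
    (hMdef : M = Matrix.fromBlocks A
      (Matrix.fromCols Bᵀ (Matrix.fromCols 0 0))
      (Matrix.fromRows B (Matrix.fromRows 0 0))
      (Matrix.fromBlocks (B * A⁻¹ * Bᵀ)
        (Matrix.fromCols (-1) 0)
        (Matrix.fromRows (-1) 0)
        (Matrix.fromBlocks (D * C⁻¹ * Dᵀ) D Dᵀ C))) :
    M.det = (-1) ^ g * A.det * C.det := by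
  have := A.invertibleOfIsUnitDet hAinv
  have := C.invertibleOfIsUnitDet hCinv
  have hM : M = fromBlocks A (fromCols Bᵀ 0) (fromRows B 0)
      (fromBlocks 0 (fromCols (-1) 0) (fromRows (-1) 0) (fromBlocks (D * C⁻¹ * Dᵀ) D Dᵀ C) +
        fromRows B 0 * ⅟A * fromCols Bᵀ 0) := by
    rw [hMdef, fromRows_mul_mul_fromCols, fromBlocks_add, invOf_eq_nonsing_inv]
    simp
  have hS : (fromBlocks (0 : Matrix (Fin g) (Fin g) ℝ) (fromCols (-1) 0) (fromRows (-1) 0)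
        (fromBlocks (D * C⁻¹ * Dᵀ) D Dᵀ C)).det =
      (fromBlocks ((fromBlocks 0 (-1) (-1) 0 : Matrix (Fin g ⊕ Fin g) (Fin g ⊕ Fin g) ℝ) +
          fromRows 0 D * ⅟C * fromCols 0 Dᵀ)
        (fromRows 0 D) (fromCols 0 Dᵀ) C).det := by
    rw [det_fromBlocks_fromBlocks_assoc, fromRows_mul_mul_fromCols, fromBlocks_add,
      invOf_eq_nonsing_inv]
    simp
  rw [hM, det_fromBlocks_add_schur₁₁, hS, det_fromBlocks_add_schur₂₂,
    det_fromBlocks_zero_neg_one_neg_one_zero, Fintype.card_fin]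
  ring

/-- The determinant formula (3.6) of Proposition 3.8 ([CL, Proposition 13]):
`det [[A, Bᵀ, 0, 0], [B, B·A⁻¹·Bᵀ, -I, 0], [0, -I, D·C⁻¹·Dᵀ, D], [0, 0, Dᵀ, C]]
  = (-1)^g · det A · det C`. -/
theorem det_glued_linking_matrix (n₁ n₂ g : ℕ)
    (A : Matrix (Fin n₁) (Fin n₁) ℝ) (hA : A.IsSymm) (hAinv : IsUnit A.det)
    (C : Matrix (Fin n₂) (Fin n₂) ℝ) (hC : C.IsSymm) (hCinv : IsUnit C.det)
    (B : Matrix (Fin g) (Fin n₁) ℝ) (D : Matrix (Fin g) (Fin n₂) ℝ)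
    (M : Matrix (Fin n₁ ⊕ (Fin g ⊕ (Fin g ⊕ Fin n₂)))
      (Fin n₁ ⊕ (Fin g ⊕ (Fin g ⊕ Fin n₂))) ℝ)
    (hMdef : M = Matrix.fromBlocks A
      (Matrix.fromCols Bᵀ (Matrix.fromCols 0 0))
      (Matrix.fromRows B (Matrix.fromRows 0 0))
      (Matrix.fromBlocks (B * A⁻¹ * Bᵀ)
        (Matrix.fromCols (-1) 0)
        (Matrix.fromRows (-1) 0)
        (Matrix.fromBlocks (D * C⁻¹ * Dᵀ) D Dᵀ C))) :
    M.det = (-1) ^ g * A.det * C.det :=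
  det_glued_linking_matrix_general n₁ n₂ g A hAinv C hCinv B D M hMdef
end

section
/- Let A be an invertible symmetric n₁×n₁ real matrix, C an invertible symmetric n₂×n₂ real matrix, B a g×n₁ real matrix and D a g×n₂ real matrix, and let M be the block matrix [[A, Bᵀ, 0, 0],[B, B·A⁻¹·Bᵀ, -I, 0],[0, -I, D·C⁻¹·Dᵀ, D],[0, 0, Dᵀ, C]]. Then M is congruent, via an invertible real matrix of determinant 1, to the block diagonal matrix with diagonal blocks A, [[0,-I],[-I,0]] (of size 2g) and C; that is, there exists a real matrix P with det P = 1 such that Pᵀ · M · P equals this block diagonal matrix. -/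
/-!
Two symmetric block eliminations. With the pivot `A`, the unitriangular congruence
`[[1, -A⁻¹Bᵀ], [0, 1]]` clears the `B`-blocks and replaces `B A⁻¹ Bᵀ` by its Schur complement
`0`; with the pivot `C`, the congruence `[[1, 0], [-C⁻¹Dᵀ, 1]]` on the last two blocks clears the
`D`-blocks and replaces `D C⁻¹ Dᵀ` by `0`, without disturbing the `-I` blocks. Both matrices are
block unitriangular, so their product has determinant `1`.
-/

open Matrix

namespace Matrix

variable {R : Type*} [CommRing R] {m n : Type*} [Fintype m]

theorem fromRows_zero_mul_mul_transpose {o : Type*} (B : Matrix n m R) (X : Matrix m m R) :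
    fromRows B (0 : Matrix o m R) * X * (fromRows B (0 : Matrix o m R))ᵀ =
      fromBlocks (B * X * Bᵀ) 0 0 0 := by
  rw [transpose_fromRows, fromRows_mul, fromRows_mul_fromCols]
  simp only [Matrix.zero_mul, transpose_zero, Matrix.mul_zero]

variable [Fintype n]

theorem transpose_fromBlocks_diag_mul_fromBlocks_mul (P : Matrix m m R) (Q : Matrix n n R)
    (A : Matrix m m R) (E : Matrix m n R) (F : Matrix n m R) (N : Matrix n n R) :
    (fromBlocks P 0 0 Q)ᵀ * fromBlocks A E F N * fromBlocks P 0 0 Q =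
      fromBlocks (Pᵀ * A * P) (Pᵀ * E * Q) (Qᵀ * F * P) (Qᵀ * N * Q) := by
  simp only [fromBlocks_transpose, fromBlocks_multiply, transpose_zero, Matrix.zero_mul,
    Matrix.mul_zero, add_zero, zero_add]

variable [DecidableEq m] [DecidableEq n]

theorem transpose_mul_fromBlocks_mul_eq_schur₁₁ {A : Matrix m m R} (hA : A.IsSymm)
    (hAinv : IsUnit A.det) (B : Matrix n m R) (X : Matrix n n R) :
    (fromBlocks 1 (-(A⁻¹ * Bᵀ)) 0 1)ᵀ * fromBlocks A Bᵀ B X * fromBlocks 1 (-(A⁻¹ * Bᵀ)) 0 1 =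
      fromBlocks A 0 0 (X - B * A⁻¹ * Bᵀ) := by
  have hAs : A⁻¹ᵀ = A⁻¹ := by rw [transpose_nonsing_inv, hA.eq]
  simp only [fromBlocks_transpose, fromBlocks_multiply, transpose_neg, transpose_mul, hAs,
    transpose_transpose, transpose_one, transpose_zero, Matrix.one_mul, Matrix.mul_one,
    Matrix.zero_mul, Matrix.mul_zero, add_zero, Matrix.neg_mul, Matrix.mul_neg, Matrix.mul_assoc,
    mul_nonsing_inv_cancel_left _ _ hAinv, nonsing_inv_mul _ hAinv, neg_add_cancel, neg_zero,
    zero_add, ← sub_eq_neg_add]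

theorem transpose_mul_fromBlocks_mul_eq_schur₂₂ {C : Matrix n n R} (hC : C.IsSymm)
    (hCinv : IsUnit C.det) (D : Matrix m n R) (X : Matrix m m R) :
    (fromBlocks 1 0 (-(C⁻¹ * Dᵀ)) 1)ᵀ * fromBlocks X D Dᵀ C * fromBlocks 1 0 (-(C⁻¹ * Dᵀ)) 1 =
      fromBlocks (X - D * C⁻¹ * Dᵀ) 0 0 C := by
  have hCs : C⁻¹ᵀ = C⁻¹ := by rw [transpose_nonsing_inv, hC.eq]
  simp only [fromBlocks_transpose, fromBlocks_multiply, transpose_neg, transpose_mul, hCs,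
    transpose_transpose, transpose_one, transpose_zero, Matrix.one_mul, Matrix.mul_one,
    Matrix.zero_mul, Matrix.mul_zero, zero_add, Matrix.neg_mul, Matrix.mul_neg, Matrix.mul_assoc,
    mul_nonsing_inv_cancel_left _ _ hCinv, nonsing_inv_mul _ hCinv, add_neg_cancel, neg_zero,
    add_zero, ← sub_eq_add_neg]

end Matrix

/-- The congruence in the proof of Proposition 3.8 ([CL, Proposition 13]): the glued linking
matrix `M = [[A, Bᵀ, 0, 0], [B, B·A⁻¹·Bᵀ, -I, 0], [0, -I, D·C⁻¹·Dᵀ, D], [0, 0, Dᵀ, C]]` is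
congruent, via an invertible matrix `P` of determinant `1`, to the block diagonal matrix with
blocks `A`, `[[0, -I], [-I, 0]]` (of size `2g`) and `C`. -/
theorem glued_linking_matrix_congruent (n₁ n₂ g : ℕ)
    (A : Matrix (Fin n₁) (Fin n₁) ℝ) (hA : A.IsSymm) (hAinv : IsUnit A.det)
    (C : Matrix (Fin n₂) (Fin n₂) ℝ) (hC : C.IsSymm) (hCinv : IsUnit C.det)
    (B : Matrix (Fin g) (Fin n₁) ℝ) (D : Matrix (Fin g) (Fin n₂) ℝ)
    (M : Matrix (Fin n₁ ⊕ (Fin g ⊕ (Fin g ⊕ Fin n₂)))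
      (Fin n₁ ⊕ (Fin g ⊕ (Fin g ⊕ Fin n₂))) ℝ)
    (hMdef : M = Matrix.fromBlocks A
      (Matrix.fromCols Bᵀ (Matrix.fromCols 0 0))
      (Matrix.fromRows B (Matrix.fromRows 0 0))
      (Matrix.fromBlocks (B * A⁻¹ * Bᵀ)
        (Matrix.fromCols (-1) 0)
        (Matrix.fromRows (-1) 0)
        (Matrix.fromBlocks (D * C⁻¹ * Dᵀ) D Dᵀ C))) :
    ∃ P : Matrix (Fin n₁ ⊕ (Fin g ⊕ (Fin g ⊕ Fin n₂)))
        (Fin n₁ ⊕ (Fin g ⊕ (Fin g ⊕ Fin n₂))) ℝ,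
      P.det = 1 ∧
      Pᵀ * M * P = Matrix.fromBlocks A 0 0
        (Matrix.fromBlocks 0
          (Matrix.fromCols (-1) 0)
          (Matrix.fromRows (-1) 0)
          (Matrix.fromBlocks 0 0 0 C)) := by
  set B' : Matrix (Fin g ⊕ (Fin g ⊕ Fin n₂)) (Fin n₁) ℝ := fromRows B 0
  set N := fromBlocks (D * C⁻¹ * Dᵀ) D Dᵀ C
  set Q : Matrix (Fin g ⊕ Fin n₂) (Fin g ⊕ Fin n₂) ℝ := fromBlocks 1 0 (-(C⁻¹ * Dᵀ)) 1
  have hM : M = fromBlocks A B'ᵀ B'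
      (fromBlocks (B * A⁻¹ * Bᵀ) (fromCols (-1) 0) (fromRows (-1) 0) N) := by
    simp only [hMdef, B', transpose_fromRows, transpose_zero, fromRows_zero, fromCols_zero]
  have hschur : fromBlocks (B * A⁻¹ * Bᵀ) (fromCols (-1) 0) (fromRows (-1) 0) N - B' * A⁻¹ * B'ᵀ
      = fromBlocks 0 (fromCols (-1) 0) (fromRows (-1) 0) N := by
    rw [fromRows_zero_mul_mul_transpose, sub_eq_add_neg, fromBlocks_neg, fromBlocks_add]
    simp only [add_neg_cancel, neg_zero, add_zero]
  set P₁ : Matrix (Fin n₁ ⊕ (Fin g ⊕ (Fin g ⊕ Fin n₂))) (Fin n₁ ⊕ (Fin g ⊕ (Fin g ⊕ Fin n₂))) ℝ :=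
    fromBlocks 1 (-(A⁻¹ * B'ᵀ)) 0 1
  set P₂ : Matrix (Fin n₁ ⊕ (Fin g ⊕ (Fin g ⊕ Fin n₂))) (Fin n₁ ⊕ (Fin g ⊕ (Fin g ⊕ Fin n₂))) ℝ :=
    fromBlocks 1 0 0 (fromBlocks 1 0 0 Q)
  refine ⟨P₁ * P₂, ?_, ?_⟩
  · simp [P₁, P₂, Q, det_fromBlocks_zero₂₁]
  · calc (P₁ * P₂)ᵀ * M * (P₁ * P₂) = P₂ᵀ * (P₁ᵀ * M * P₁) * P₂ := by
          simp only [transpose_mul, Matrix.mul_assoc]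
      _ = _ := by
          rw [hM, transpose_mul_fromBlocks_mul_eq_schur₁₁ hA hAinv, hschur,
            transpose_fromBlocks_diag_mul_fromBlocks_mul,
            transpose_fromBlocks_diag_mul_fromBlocks_mul,
            transpose_mul_fromBlocks_mul_eq_schur₂₂ hC hCinv]
          simp [Q, fromBlocks_transpose, fromCols_mul_fromBlocks, fromBlocks_mul_fromRows]
end
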